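/- Let G be a finite simple graph with path decomposition 𝒫 = (X_1,…,X_d), let 𝒢 be the derived graph, and let C ⊆ V(𝒢) have a border partition (B_L, B_R) with B_L ≠ ∅. Set i = r(B_L) and suppose i ≥ 2 and that no vertex of V_i ∩ B_L has a neighbor in V_{i+1} \ C (as holds when some left branch branch_L(C,t) with t < i is proper). Set A = V_{i−1} ∩ (N_𝒢(δ(C) ∩ V_i) \ C), C′ = C ∪ A, and B_L′ = (B_L ∪ A) ∩ δ(C′). Then B_L′ ∩ (V_i ∪ V_{i+1} ∪ … ∪ V_d) = ∅; in particular, if B_L′ ≠ ∅ then r(B_L′) < r(B_L). -/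

import Mathlib

open SimpleGraph

/-- A path decomposition of `G` with bags `X 0, …, X (d-1)`. -/
def IsPathDecomp {V : Type*} (G : SimpleGraph V) {d : ℕ} (X : Fin d → Finset V) : Prop :=
  (∀ v : V, ∃ i, v ∈ X i) ∧
  (∀ u v : V, G.Adj u v → ∃ i, u ∈ X i ∧ v ∈ X i) ∧
  (∀ i j k : Fin d, i ≤ j → j ≤ k → ∀ v : V, v ∈ X i → v ∈ X k → v ∈ X j)

/-- Vertices of the derived graph: pairs `(i, H)` where `H` is a connected component of
the subgraph of `G` induced by the bag `X i`. -/
def DVert {V : Type*} (G : SimpleGraph V) {d : ℕ} (X : Fin d → Finset V) : Type _ :=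
  Σ i : Fin d, (G.induce (X i : Set V)).ConnectedComponent

/-- The set `V(H) ⊆ V(G)` of vertices of the component represented by a derived vertex. -/
def dsupp {V : Type*} (G : SimpleGraph V) {d : ℕ} (X : Fin d → Finset V)
    (x : DVert G X) : Set V :=
  {v | ∃ h : v ∈ (X x.1 : Set V),
    (G.induce (X x.1 : Set V)).connectedComponentMk ⟨v, h⟩ = x.2}

/-- The derived graph `𝒢` of `G` and the path decomposition `X`: vertices in consecutive
layers are adjacent exactly when their components share a vertex of `G`.
(Layers are numbered `1, …, d`; a vertex `x` lies in layer `x.1 + 1`.) -/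
def derived {V : Type*} (G : SimpleGraph V) {d : ℕ} (X : Fin d → Finset V) :
    SimpleGraph (DVert G X) where
  Adj a b := ((a.1 : ℕ) + 1 = (b.1 : ℕ) ∨ (b.1 : ℕ) + 1 = (a.1 : ℕ)) ∧
    (dsupp G X a ∩ dsupp G X b).Nonempty
  symm := by
    constructor
    rintro a b ⟨h1, h2⟩
    exact ⟨h1.symm, by rwa [Set.inter_comm]⟩
  loopless := by
    constructor
    rintro a ⟨h1, -⟩
    rcases h1 with h | h <;> omega

/-- The layer `V_i` of the derived graph (`1`-based: `V_i = {x | x.1 + 1 = i}`). -/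
def layer {V : Type*} (G : SimpleGraph V) {d : ℕ} (X : Fin d → Finset V) (i : ℕ) :
    Set (DVert G X) :=
  {x | (x.1 : ℕ) + 1 = i}

/-- The border `δ(C)`: vertices of `C` with a neighbor outside `C`. -/
def border {V : Type*} (G : SimpleGraph V) {d : ℕ} (X : Fin d → Finset V)
    (C : Set (DVert G X)) : Set (DVert G X) :=
  {x | x ∈ C ∧ ∃ y, (derived G X).Adj x y ∧ y ∉ C}

/-- The neighborhood `N_𝒢(S)`: vertices outside `S` adjacent to some vertex of `S`. -/
def nbhd {V : Type*} (G : SimpleGraph V) {d : ℕ} (X : Fin d → Finset V)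
    (S : Set (DVert G X)) : Set (DVert G X) :=
  {u | u ∉ S ∧ ∃ x ∈ S, (derived G X).Adj u x}

/-- The weight of a set of derived vertices: `ω(S) = Σ_{x∈S} |V(H_x)|`. -/
noncomputable def wsum {V : Type*} (G : SimpleGraph V) {d : ℕ} (X : Fin d → Finset V)
    (S : Set (DVert G X)) : ℕ :=
  ∑ᶠ x ∈ S, (dsupp G X x).ncard

/-- The right extremity `r(S)` (`1`-based); `r(∅) = 0` by convention. -/
noncomputable def rIdx {V : Type*} (G : SimpleGraph V) {d : ℕ} (X : Fin d → Finset V)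
    (S : Set (DVert G X)) : ℕ :=
  sSup {n | ∃ x ∈ S, (x.1 : ℕ) + 1 = n}

/-- The left extremity `l(S)` (`1`-based); `l(∅) = d + 1` by convention. -/
noncomputable def lIdx {V : Type*} (G : SimpleGraph V) {d : ℕ} (X : Fin d → Finset V)
    (S : Set (DVert G X)) : ℕ :=
  sInf ({n | ∃ x ∈ S, (x.1 : ℕ) + 1 = n} ∪ {d + 1})

/-- `(BL, BR)` is a border partition of `C`: disjoint sets whose union is `δ(C)`,
with `BL ⊆ V_1 ∪ … ∪ V_i` and `BR ⊆ V_{i+1} ∪ … ∪ V_d` for some `0 ≤ i ≤ d`. -/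
def IsBorderPartition {V : Type*} (G : SimpleGraph V) {d : ℕ} (X : Fin d → Finset V)
    (C BL BR : Set (DVert G X)) : Prop :=
  Disjoint BL BR ∧ border G X C = BL ∪ BR ∧
    ∃ i : ℕ, i ≤ d ∧ (∀ x ∈ BL, (x.1 : ℕ) + 1 ≤ i) ∧ (∀ x ∈ BR, i + 1 ≤ (x.1 : ℕ) + 1)

/-- `u` and `w` are connected by a progressive path of `𝒢`
(a path meeting each layer at most once). -/
def ProgConn {V : Type*} (G : SimpleGraph V) {d : ℕ} (X : Fin d → Finset V)
    (u w : DVert G X) : Prop :=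
  ∃ p : (derived G X).Walk u w, ∀ a ∈ p.support, ∀ b ∈ p.support, a.1 = b.1 → a = b

/-- The vertex set of the left branch `branch_L(C, i)`: `BL` together with all
`v ∈ V_k \ C`, `i ≤ k < r(BL)`, joined by a progressive path to some `x ∈ V_j ∩ BL`, `k < j`. -/
def branchL {V : Type*} (G : SimpleGraph V) {d : ℕ} (X : Fin d → Finset V)
    (C BL : Set (DVert G X)) (i : ℕ) : Set (DVert G X) :=
  BL ∪ {v | v ∉ C ∧ i ≤ (v.1 : ℕ) + 1 ∧ (v.1 : ℕ) + 1 < rIdx G X BL ∧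
    ∃ x ∈ BL, (v.1 : ℕ) < (x.1 : ℕ) ∧ ProgConn G X v x}

/-- The vertex set of the right branch `branch_R(C, i)`: `BR` together with all
`v ∈ V_k \ C`, `l(BR) < k ≤ i`, joined by a progressive path to some `x ∈ V_j ∩ BR`, `j < k`. -/
def branchR {V : Type*} (G : SimpleGraph V) {d : ℕ} (X : Fin d → Finset V)
    (C BR : Set (DVert G X)) (i : ℕ) : Set (DVert G X) :=
  BR ∪ {v | v ∉ C ∧ lIdx G X BR < (v.1 : ℕ) + 1 ∧ (v.1 : ℕ) + 1 ≤ i ∧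
    ∃ x ∈ BR, (x.1 : ℕ) < (v.1 : ℕ) ∧ ProgConn G X v x}

/-- The external vertices of a branch with vertex set `S` (relative to `C`):
vertices of `S` with a neighbor outside `C ∪ S`. -/
def extSet {V : Type*} (G : SimpleGraph V) {d : ℕ} (X : Fin d → Finset V)
    (C S : Set (DVert G X)) : Set (DVert G X) :=
  {v | v ∈ S ∧ ∃ u, (derived G X).Adj v u ∧ u ∉ C ∪ S}

/-- The left branch `branch_L(C, i)` is proper: no external vertices in layers `> i`. -/
def ProperL {V : Type*} (G : SimpleGraph V) {d : ℕ} (X : Fin d → Finset V)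
    (C BL : Set (DVert G X)) (i : ℕ) : Prop :=
  ∀ v ∈ extSet G X C (branchL G X C BL i), (v.1 : ℕ) + 1 ≤ i

/-- The right branch `branch_R(C, i)` is proper: no external vertices in layers `< i`. -/
def ProperR {V : Type*} (G : SimpleGraph V) {d : ℕ} (X : Fin d → Finset V)
    (C BR : Set (DVert G X)) (i : ℕ) : Prop :=
  ∀ v ∈ extSet G X C (branchR G X C BR i), i ≤ (v.1 : ℕ) + 1

/- Let `i = r(BL)`. A vertex `x ∈ V_i` of `BL` has neighbours only in `V_{i-1}` and `V_{i+1}`. By hypothesis those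
in `V_{i+1}` lie in `C`, and those in `V_{i-1} \ C` are exactly what the step adds to `C`, so `x`
is no longer a border vertex of `C'`. The vertices added lie in `V_{i-1}`, and every other vertex
of `BL` lies in a layer below `r(BL)` already. -/

section

variable {V : Type*} {G : SimpleGraph V} {d : ℕ} {X : Fin d → Finset V}

lemma bddAbove_layerIndices (S : Set (DVert G X)) :
    BddAbove {n | ∃ x ∈ S, (x.1 : ℕ) + 1 = n} :=
  ⟨d, by rintro n ⟨x, -, rfl⟩; exact x.1.isLt⟩

lemma succ_le_rIdx {S : Set (DVert G X)} {x : DVert G X} (hx : x ∈ S) :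
    (x.1 : ℕ) + 1 ≤ rIdx G X S :=
  le_csSup (bddAbove_layerIndices S) ⟨x, hx, rfl⟩

lemma rIdx_lt_of_forall_lt {S : Set (DVert G X)} {n : ℕ} (hS : S.Nonempty)
    (h : ∀ x ∈ S, (x.1 : ℕ) + 1 < n) : rIdx G X S < n := by
  obtain ⟨x, hx⟩ := hS
  obtain ⟨y, hy, hr⟩ : ∃ y ∈ S, (y.1 : ℕ) + 1 = rIdx G X S :=
    Nat.sSup_mem (s := {n | ∃ x ∈ S, (x.1 : ℕ) + 1 = n}) ⟨_, x, hx, rfl⟩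
      (bddAbove_layerIndices S)
  exact hr ▸ h y hy

/-- The set `A` that the left-extension step at `i = r(BL)` adds to `C`. -/
def leftExtension (G : SimpleGraph V) (X : Fin d → Finset V) (C : Set (DVert G X)) (i : ℕ) :
    Set (DVert G X) :=
  layer G X (i - 1) ∩ (nbhd G X (border G X C ∩ layer G X i) \ C)

lemma notMem_border_union_leftExtension {C : Set (DVert G X)} {i : ℕ} {x : DVert G X}
    (hxC : x ∈ border G X C) (hxi : x ∈ layer G X i)
    (hno : ¬ ∃ u, u ∈ layer G X (i + 1) ∧ u ∉ C ∧ (derived G X).Adj x u) :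
    x ∉ border G X (C ∪ leftExtension G X C i) := by
  rintro ⟨-, y, hxy, hy⟩
  rw [Set.mem_union, not_or] at hy
  have hxi' : (x.1 : ℕ) + 1 = i := hxi
  rcases hxy.1 with hup | hdown
  · exact hno ⟨y, show (y.1 : ℕ) + 1 = i + 1 by omega, hy.1, hxy⟩
  · refine hy.2 ⟨show (y.1 : ℕ) + 1 = i - 1 by omega, ⟨?_, x, ⟨hxC, hxi⟩, hxy.symm⟩, hy.1⟩
    exact fun hyC => hy.1 hyC.1.1

lemma succ_lt_rIdx_of_mem_border_union_leftExtension {C BL : Set (DVert G X)}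
    (hBL : BL ⊆ border G X C)
    (hno : ∀ x ∈ layer G X (rIdx G X BL) ∩ BL,
      ¬ ∃ u, u ∈ layer G X (rIdx G X BL + 1) ∧ u ∉ C ∧ (derived G X).Adj x u)
    {x : DVert G X}
    (hx : x ∈ (BL ∪ leftExtension G X C (rIdx G X BL)) ∩
      border G X (C ∪ leftExtension G X C (rIdx G X BL))) :
    (x.1 : ℕ) + 1 < rIdx G X BL := by
  obtain ⟨hxBL | hxA, hx⟩ := hx
  · refine (succ_le_rIdx hxBL).lt_of_ne fun hxi => ?_
    exact notMem_border_union_leftExtension (hBL hxBL) hxi (hno x ⟨hxi, hxBL⟩) hx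
  · have : (x.1 : ℕ) + 1 = rIdx G X BL - 1 := hxA.1
    omega

end

theorem le_step_moves_left_border_general {V : Type*} (G : SimpleGraph V)
    {d : ℕ} (X : Fin d → Finset V)
    (C BL BR : Set (DVert G X)) (hpart : IsBorderPartition G X C BL BR)
    (hno : ∀ x ∈ layer G X (rIdx G X BL) ∩ BL,
      ¬ ∃ u, u ∈ layer G X (rIdx G X BL + 1) ∧ u ∉ C ∧ (derived G X).Adj x u) :
    ∀ A C' BL' : Set (DVert G X),
      A = layer G X (rIdx G X BL - 1) ∩
            (nbhd G X (border G X C ∩ layer G X (rIdx G X BL)) \ C) →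
      C' = C ∪ A →
      BL' = (BL ∪ A) ∩ border G X C' →
      BL' ∩ {x : DVert G X | rIdx G X BL ≤ (x.1 : ℕ) + 1} = ∅ ∧
        (BL'.Nonempty → rIdx G X BL' < rIdx G X BL) := by
  rintro A C' BL' rfl rfl rfl
  have hBL : BL ⊆ border G X C := hpart.2.1 ▸ Set.subset_union_left
  have hlt := fun x hx => succ_lt_rIdx_of_mem_border_union_leftExtension hBL hno (x := x) hx
  refine ⟨Set.eq_empty_of_forall_notMem fun x hx => (hlt x hx.1).not_ge hx.2, fun hne => ?_⟩
  exact rIdx_lt_of_forall_lt hne hlt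

/-- If `i = r(BL) ≥ 2` and no vertex of `V_i ∩ BL` has a neighbor in `V_{i+1} \ C`, then
after the left-extension step the new left border `BL'` avoids all layers `≥ i`; in
particular, if `BL'` is nonempty then `r(BL') < r(BL)`. -/
theorem le_step_moves_left_border {V : Type*} [Fintype V] (G : SimpleGraph V)
    {d : ℕ} (X : Fin d → Finset V) (hX : IsPathDecomp G X)
    (C BL BR : Set (DVert G X)) (hpart : IsBorderPartition G X C BL BR)
    (hBL : BL.Nonempty) (h2 : 2 ≤ rIdx G X BL)
    (hno : ∀ x ∈ layer G X (rIdx G X BL) ∩ BL,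
      ¬ ∃ u, u ∈ layer G X (rIdx G X BL + 1) ∧ u ∉ C ∧ (derived G X).Adj x u) :
    ∀ A C' BL' : Set (DVert G X),
      A = layer G X (rIdx G X BL - 1) ∩
            (nbhd G X (border G X C ∩ layer G X (rIdx G X BL)) \ C) →
      C' = C ∪ A →
      BL' = (BL ∪ A) ∩ border G X C' →
      BL' ∩ {x : DVert G X | rIdx G X BL ≤ (x.1 : ℕ) + 1} = ∅ ∧
        (BL'.Nonempty → rIdx G X BL' < rIdx G X BL) :=
  le_step_moves_left_border_general G X C BL BR hpart hno
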